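/- arXiv:math/9903035 — 8 statements merged into one kernel-verified Lean document; each statement's English description precedes it below -/
import Mathlib

section
/- Suppose positive integers a, b, c and positive integers r, s, t satisfy ab + 1 = r^2, ac + 1 = s^2, bc + 1 = t^2. Let d = a + b + c + 2abc + 2rst. Then ad + 1 = (at + rs)^2, bd + 1 = (bs + rt)^2, and cd + 1 = (cr + st)^2. -/
theorem mul_add_one_eq_sq_of_diophantine_triple {R : Type*} [CommRing R] {a b c r s t : R}
    (hab : a * b + 1 = r ^ 2) (hac : a * c + 1 = s ^ 2) (hbc : b * c + 1 = t ^ 2) :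
    a * (a + b + c + 2 * a * b * c + 2 * r * s * t) + 1 = (a * t + r * s) ^ 2 := by
  linear_combination (a * c + 1) * hab + r ^ 2 * hac + a ^ 2 * hbc

-- `d` is symmetric in the triple, so each identity is the first one with the roles permuted.
theorem stmt_5_general (a b c r s t : ℤ)
    (h1 : a*b + 1 = r^2) (h2 : a*c + 1 = s^2) (h3 : b*c + 1 = t^2) :
    let d := a + b + c + 2*a*b*c + 2*r*s*t
    a*d + 1 = (a*t + r*s)^2 ∧ b*d + 1 = (b*s + r*t)^2 ∧ c*d + 1 = (c*r + s*t)^2 := by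
  dsimp only
  refine ⟨mul_add_one_eq_sq_of_diophantine_triple h1 h2 h3, ?_, ?_⟩
  · linear_combination mul_add_one_eq_sq_of_diophantine_triple
      (a := b) (b := a) (by rwa [mul_comm]) h3 h2
  · linear_combination mul_add_one_eq_sq_of_diophantine_triple
      (a := c) (b := a) (c := b) (by rwa [mul_comm]) (by rwa [mul_comm]) h1

theorem stmt_5 (a b c r s t : ℤ) (ha : 0 < a) (hb : 0 < b) (hc : 0 < c)
    (hr : 0 < r) (hs : 0 < s) (ht : 0 < t)
    (h1 : a*b + 1 = r^2) (h2 : a*c + 1 = s^2) (h3 : b*c + 1 = t^2) :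
    let d := a + b + c + 2*a*b*c + 2*r*s*t
    a*d + 1 = (a*t + r*s)^2 ∧ b*d + 1 = (b*s + r*t)^2 ∧ c*d + 1 = (c*r + s*t)^2 :=
  stmt_5_general a b c r s t h1 h2 h3
end

section
/- Suppose positive integers a, b, c, r, s, t satisfy ab + 1 = r^2, ac + 1 = s^2, bc + 1 = t^2, and let d = a + b + c + 2abc + 2rst. Then P(a,b,c,d) = 0, where P(a,b,c,d) = a^2 + b^2 + c^2 + d^2 - 2ab - 2ac - 2ad - 2bc - 2bd - 2cd - 4abcd - 4. -/
/- Completing the square in `d`: `P a b c d = (d - e)^2 - 4(ab+1)(ac+1)(bc+1)` with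
`e = a + b + c + 2abc`, so when the three products are `r^2, s^2, t^2` the roots of `P a b c ·`
are `e ± 2rst`. -/

def P (a b c d : ℤ) : ℤ := a^2 + b^2 + c^2 + d^2 - 2*a*b - 2*a*c - 2*a*d - 2*b*c - 2*b*d - 2*c*d - 4*a*b*c*d - 4

theorem P_eq_sq_sub (a b c d : ℤ) :
    P a b c d = (d - (a + b + c + 2*a*b*c))^2 - 4*(a*b + 1)*(a*c + 1)*(b*c + 1) := by
  unfold P
  ring

theorem stmt_6_general (a b c r s t : ℤ)
    (h1 : a*b + 1 = r^2) (h2 : a*c + 1 = s^2) (h3 : b*c + 1 = t^2) :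
    P a b c (a + b + c + 2*a*b*c + 2*r*s*t) = 0 := by
  rw [P_eq_sq_sub, h1, h2, h3]
  ring

theorem stmt_6 (a b c r s t : ℤ) (ha : 0 < a) (hb : 0 < b) (hc : 0 < c)
    (hr : 0 < r) (hs : 0 < s) (ht : 0 < t)
    (h1 : a*b + 1 = r^2) (h2 : a*c + 1 = s^2) (h3 : b*c + 1 = t^2) :
    P a b c (a + b + c + 2*a*b*c + 2*r*s*t) = 0 :=
  stmt_6_general a b c r s t h1 h2 h3
end

section
/- Let a, b, c be nonnegative integers with a ≤ b ≤ c and let d be an integer with d ≥ c such that P(a,b,c,d) = 0. Then d' = 4abc + 2a + 2b + 2c - d satisfies d' < c; indeed d * d' = (c - a - b)^2 - 4(ab+1) < c^2. -/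
theorem P_eq_sub_mul (a b c d : ℤ) :
    P a b c d = (c - a - b)^2 - 4*(a*b+1) - d * (4*a*b*c + 2*a + 2*b + 2*c - d) := by
  unfold P; ring

theorem mul_vieta_of_P_eq_zero {a b c d : ℤ} (h : P a b c d = 0) :
    d * (4*a*b*c + 2*a + 2*b + 2*c - d) = (c - a - b)^2 - 4*(a*b+1) := by
  rw [P_eq_sub_mul] at h
  linarith

theorem sq_sub_sub_sub_lt_sq {a b c : ℤ} (ha : 0 ≤ a) (hb : 0 ≤ b) (habc : a + b ≤ 2 * c) :
    (c - a - b)^2 - 4*(a*b+1) < c^2 := by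
  linarith [mul_nonneg ha hb, mul_nonpos_of_nonneg_of_nonpos (add_nonneg ha hb)
    (sub_nonpos.mpr habc)]

theorem pos_of_P_eq_zero {a b c d : ℤ} (ha : 0 ≤ a) (hab : a ≤ b) (hbc : b ≤ c) (hcd : c ≤ d)
    (h : P a b c d = 0) : 0 < d := by
  refine lt_of_le_of_ne (by omega) fun hd0 => ?_
  obtain ⟨rfl, rfl, rfl, rfl⟩ : a = 0 ∧ b = 0 ∧ c = 0 ∧ d = 0 := by omega
  simp [P] at h

theorem stmt_9 (a b c d : ℤ) (ha : 0 ≤ a) (hab : a ≤ b) (hbc : b ≤ c) (hd : c ≤ d)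
    (h : P a b c d = 0) :
    (4*a*b*c + 2*a + 2*b + 2*c - d) < c ∧
    d * (4*a*b*c + 2*a + 2*b + 2*c - d) = (c - a - b)^2 - 4*(a*b+1) ∧
    (c - a - b)^2 - 4*(a*b+1) < c^2 := by
  have hvieta := mul_vieta_of_P_eq_zero h
  have hlt : (c - a - b)^2 - 4*(a*b+1) < c^2 := sq_sub_sub_sub_lt_sq ha (by omega) (by omega)
  have hdpos : 0 < d := pos_of_P_eq_zero ha hab hbc hd h
  refine ⟨lt_of_mul_lt_mul_left ?_ hdpos.le, hvieta, hlt⟩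
  calc d * (4*a*b*c + 2*a + 2*b + 2*c - d) = (c - a - b)^2 - 4*(a*b+1) := hvieta
    _ < c^2 := hlt
    _ ≤ d * c := by rw [sq]; exact mul_le_mul_of_nonneg_right hd (by omega)
end

section
/- If a, b, c are nonnegative integers and d is a negative integer such that P(a,b,c,d) = 0, then (a,b,c,d) equals (0,0,0,-2) or (0,0,1,-1) up to permutation of a, b, c. -/
lemma P_eq_sq_sub_mul (a b c d : ℤ) :
    P a b c d = (a + b - c - d) ^ 2 - 4 * (a * b + 1) * (c * d + 1) := by
  unfold P; ring

lemma P_rotate (a b c d : ℤ) : P a b c d = P b c a d := by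
  unfold P; ring

lemma neg_one_le_mul_of_P_eq_zero {a b c d : ℤ} (ha : 0 ≤ a) (hb : 0 ≤ b)
    (h : P a b c d = 0) : -1 ≤ c * d := by
  rw [P_eq_sq_sub_mul, sub_eq_zero] at h
  have hab : 0 < 4 * (a * b + 1) := by positivity
  have : 0 ≤ 4 * (a * b + 1) * (c * d + 1) := h ▸ sq_nonneg _
  linarith [nonneg_of_mul_nonneg_right this hab]

lemma eq_zero_of_neg_one_le_mul {c d : ℤ} (hc : 0 ≤ c) (hd : d ≤ -2) (h : -1 ≤ c * d) :
    c = 0 := by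
  nlinarith

theorem stmt_10 (a b c d : ℤ) (ha : 0 ≤ a) (hb : 0 ≤ b) (hc : 0 ≤ c) (hd : d < 0)
    (h : P a b c d = 0) :
    (a = 0 ∧ b = 0 ∧ c = 0 ∧ d = -2) ∨
    (d = -1 ∧ ((a = 0 ∧ b = 0 ∧ c = 1) ∨ (a = 0 ∧ b = 1 ∧ c = 0) ∨
               (a = 1 ∧ b = 0 ∧ c = 0))) := by
  have hcd := neg_one_le_mul_of_P_eq_zero ha hb h
  have had := neg_one_le_mul_of_P_eq_zero hb hc (by rwa [P_rotate] at h)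
  have hbd := neg_one_le_mul_of_P_eq_zero hc ha (by rwa [P_rotate, P_rotate] at h)
  obtain hd2 | rfl : d ≤ -2 ∨ d = -1 := by omega
  · obtain rfl := eq_zero_of_neg_one_le_mul ha hd2 had
    obtain rfl := eq_zero_of_neg_one_le_mul hb hd2 hbd
    obtain rfl := eq_zero_of_neg_one_le_mul hc hd2 hcd
    have : (d + 2) * (d - 2) = 0 := by rw [← h]; unfold P; ring
    rcases mul_eq_zero.mp this with h2 | h2 <;> omega
  · have ha1 : a ≤ 1 := by linarith
    have hb1 : b ≤ 1 := by linarith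
    have hc1 : c ≤ 1 := by linarith
    interval_cases a <;> interval_cases b <;> interval_cases c <;> simp_all [P]
end

section
/- Suppose a and b are even positive integers and r is a positive integer with ab + 1 = r^2 (so r is odd). Define a+ = gcd(a/2, (r+1)/2), a- = gcd(a/2, (r-1)/2), b+ = gcd(b/2, (r+1)/2), b- = gcd(b/2, (r-1)/2). Then a = 2*a+*a-, b = 2*b+*b-, r = a+*b+ + a-*b-, and a+*b+ - a-*b- = 1. -/
/-!
Write a = 2A, b = 2B and r = 2m + 1 (r is odd because r² = ab + 1 is). Then AB = (m + 1)m with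
m + 1 and m coprime, so A splits as gcd(A, m+1)·gcd(A, m), likewise B, and the two factors of
m + 1 coming from A and B multiply back to m + 1, those of m to m. The last two identities give
r = (m + 1) + m and 1 = (m + 1) - m.
-/

namespace Nat

theorem gcd_mul_gcd_eq_of_mul_eq_mul_of_coprime {A B p q : ℕ} (hpq : p.Coprime q)
    (h : A * B = p * q) : A.gcd p * B.gcd p = p := by
  apply Nat.dvd_antisymm
  · have hq : (A.gcd p * B.gcd p).Coprime q :=
      (hpq.coprime_dvd_left (A.gcd_dvd_right p)).mul_left (hpq.coprime_dvd_left (B.gcd_dvd_right p))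
    apply hq.dvd_of_dvd_mul_right
    rw [← h]
    exact Nat.mul_dvd_mul (A.gcd_dvd_left p) (B.gcd_dvd_left p)
  · obtain ⟨d₁, d₂, hA, hB, hp⟩ := dvd_mul.mp (h ▸ dvd_mul_right p q : p ∣ A * B)
    have hd₁ : d₁ ∣ p := hp ▸ dvd_mul_right d₁ d₂
    have hd₂ : d₂ ∣ p := hp ▸ dvd_mul_left d₂ d₁
    calc p = d₁ * d₂ := hp
      _ ∣ A.gcd p * B.gcd p := Nat.mul_dvd_mul (Nat.dvd_gcd hA hd₁) (Nat.dvd_gcd hB hd₂)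

theorem gcd_factorization_of_mul_eq_succ_mul {A B m : ℕ} (h : A * B = (m + 1) * m) :
    A.gcd (m + 1) * A.gcd m = A ∧ B.gcd (m + 1) * B.gcd m = B ∧
      A.gcd (m + 1) * B.gcd (m + 1) = m + 1 ∧ A.gcd m * B.gcd m = m := by
  have hcop : (m + 1).Coprime m := by simp
  refine ⟨(gcd_mul_gcd_eq_iff_dvd_mul_of_coprime hcop).mpr ⟨B, h.symm⟩,
    (gcd_mul_gcd_eq_iff_dvd_mul_of_coprime hcop).mpr ⟨A, by rw [← h, mul_comm]⟩,
    gcd_mul_gcd_eq_of_mul_eq_mul_of_coprime hcop h,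
    gcd_mul_gcd_eq_of_mul_eq_mul_of_coprime hcop.symm (by rw [h, mul_comm])⟩

end Nat

theorem stmt_13_general (a b r : ℕ)
    (hae : 2 ∣ a) (hbe : 2 ∣ b) (h : a*b + 1 = r^2) :
    Nat.gcd (a/2) ((r+1)/2) * Nat.gcd (a/2) ((r-1)/2) * 2 = a ∧
    Nat.gcd (b/2) ((r+1)/2) * Nat.gcd (b/2) ((r-1)/2) * 2 = b ∧
    Nat.gcd (a/2) ((r+1)/2) * Nat.gcd (b/2) ((r+1)/2) +
      Nat.gcd (a/2) ((r-1)/2) * Nat.gcd (b/2) ((r-1)/2) = r ∧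
    Nat.gcd (a/2) ((r+1)/2) * Nat.gcd (b/2) ((r+1)/2) -
      Nat.gcd (a/2) ((r-1)/2) * Nat.gcd (b/2) ((r-1)/2) = 1 := by
  obtain ⟨A, rfl⟩ := hae
  obtain ⟨B, rfl⟩ := hbe
  obtain ⟨m, rfl⟩ : Odd r := by
    rw [← Nat.odd_pow_iff two_ne_zero, ← h]
    exact ⟨2 * A * B, by ring⟩
  have hAB : A * B = (m + 1) * m := by linarith
  simp only [show 2 * A / 2 = A by omega, show 2 * B / 2 = B by omega,
    show (2 * m + 1 + 1) / 2 = m + 1 by omega, show (2 * m + 1 - 1) / 2 = m by omega]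
  obtain ⟨hA, hB, hsucc, hm⟩ := Nat.gcd_factorization_of_mul_eq_succ_mul hAB
  refine ⟨by rw [hA, mul_comm], by rw [hB, mul_comm], by rw [hsucc, hm]; ring, by omega⟩

theorem stmt_13 (a b r : ℕ) (ha : 0 < a) (hb : 0 < b) (hr : 0 < r)
    (hae : 2 ∣ a) (hbe : 2 ∣ b) (h : a*b + 1 = r^2) :
    Nat.gcd (a/2) ((r+1)/2) * Nat.gcd (a/2) ((r-1)/2) * 2 = a ∧
    Nat.gcd (b/2) ((r+1)/2) * Nat.gcd (b/2) ((r-1)/2) * 2 = b ∧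
    Nat.gcd (a/2) ((r+1)/2) * Nat.gcd (b/2) ((r+1)/2) +
      Nat.gcd (a/2) ((r-1)/2) * Nat.gcd (b/2) ((r-1)/2) = r ∧
    Nat.gcd (a/2) ((r+1)/2) * Nat.gcd (b/2) ((r+1)/2) -
      Nat.gcd (a/2) ((r-1)/2) * Nat.gcd (b/2) ((r-1)/2) = 1 :=
  stmt_13_general a b r hae hbe h
end

section
/- Let a+, a-, b+, b- be positive integers with a+*b+ - a-*b- = 1. Set a = 2*a+*a-, b = 2*b+*b-, and c = 2*(b- + a+)*(b+ + a-). Then ab + 1, ac + 1, and bc + 1 are all perfect squares, and the triple (a, b, c) is regular, i.e., P(a,b,c,0) = 0 where P(a,b,c,d) = a^2 + b^2 + c^2 + d^2 - 2ab - 2ac - 2ad - 2bc - 2bd - 2cd - 4abcd - 4. -/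
theorem isSquare_mul_add_one_of_unimodular {R : Type*} [CommRing R] {x y z w : R}
    (h : (x * z - y * w) ^ 2 = 1) : IsSquare (2 * x * y * (2 * z * w) + 1) :=
  ⟨x * z + y * w, by linear_combination -h⟩

theorem P_mediant_eq_zero {x y z w : ℤ} (h : (x * z - y * w) ^ 2 = 1) :
    P (2 * x * y) (2 * z * w) (2 * (w + x) * (z + y)) 0 = 0 := by
  unfold P
  linear_combination 4 * h

theorem stmt_14_general (ap am bp bm : ℤ)
    (h : ap*bp - am*bm = 1) :
    let a := 2*ap*am
    let b := 2*bp*bm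
    let c := 2*(bm + ap)*(bp + am)
    IsSquare (a*b + 1) ∧ IsSquare (a*c + 1) ∧ IsSquare (b*c + 1) ∧
    P a b c 0 = 0 := by
  have hdet : (ap * bp - am * bm) ^ 2 = 1 := by rw [h]; norm_num
  refine ⟨isSquare_mul_add_one_of_unimodular hdet, ?_,
    isSquare_mul_add_one_of_unimodular (by linear_combination hdet), P_mediant_eq_zero hdet⟩
  rw [mul_right_comm 2 (bm + ap)]
  exact isSquare_mul_add_one_of_unimodular (by linear_combination hdet)

theorem stmt_14 (ap am bp bm : ℤ) (h1 : 0 < ap) (h2 : 0 < am) (h3 : 0 < bp) (h4 : 0 < bm)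
    (h : ap*bp - am*bm = 1) :
    let a := 2*ap*am
    let b := 2*bp*bm
    let c := 2*(bm + ap)*(bp + am)
    IsSquare (a*b + 1) ∧ IsSquare (a*c + 1) ∧ IsSquare (b*c + 1) ∧
    P a b c 0 = 0 :=
  stmt_14_general ap am bp bm h
end

section
/- Let A, B, C be 4-tuples of positive integers written as columns (a_{++}, a_{+-}, a_{-+}, a_{--}), (b_{-+}, b_{--}, b_{+-}, b_{++}), (c_{--}, c_{++}, c_{-+}, c_{+-}) satisfying the three relations a_{++}a_{+-}b_{++}b_{+-} - a_{-+}a_{--}b_{-+}b_{--} = 1, a_{++}a_{-+}c_{++}c_{+-} - a_{+-}a_{--}c_{-+}c_{--} = 1, b_{++}b_{-+}c_{++}c_{-+} - b_{+-}b_{--}c_{+-}c_{--} = 1. Define d1 = a_{-+}b_{--}c_{+-} + a_{+-}b_{++}c_{-+}, d2 = a_{--}b_{-+}c_{-+} + a_{++}b_{+-}c_{+-}, d3 = a_{++}b_{++}c_{++} + a_{--}b_{--}c_{--}, d4 = a_{+-}b_{+-}c_{--} + a_{-+}b_{-+}c_{++}. Then c_{-+}c_{+-}d3*d4 - c_{--}c_{++}d1*d2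 = 1, a_{+-}a_{-+}d2*d3 - a_{++}a_{--}d1*d4 = 1, and b_{-+}b_{+-}d1*d3 - b_{--}b_{++}d2*d4 = 1. -/
/-! Each of the three expressions factors, as a polynomial identity, into the product of two of the
three given relations, so it equals `1 * 1`. -/

section BranchFactorization

variable {R : Type*} [CommRing R] (app apm amp amm bpp bpm bmp bmm cpp cpm cmp cmm : R)

theorem branch_factor_c :
    cmp*cpm*(app*bpp*cpp + amm*bmm*cmm)*(apm*bpm*cmm + amp*bmp*cpp)
      - cmm*cpp*(amp*bmm*cpm + apm*bpp*cmp)*(amm*bmp*cmp + app*bpm*cpm)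
      = (app*amp*cpp*cpm - apm*amm*cmp*cmm) * (bpp*bmp*cpp*cmp - bpm*bmm*cpm*cmm) := by
  ring

theorem branch_factor_a :
    apm*amp*(amm*bmp*cmp + app*bpm*cpm)*(app*bpp*cpp + amm*bmm*cmm)
      - app*amm*(amp*bmm*cpm + apm*bpp*cmp)*(apm*bpm*cmm + amp*bmp*cpp)
      = (app*apm*bpp*bpm - amp*amm*bmp*bmm) * (app*amp*cpp*cpm - apm*amm*cmp*cmm) := by
  ring

theorem branch_factor_b :
    bmp*bpm*(amp*bmm*cpm + apm*bpp*cmp)*(app*bpp*cpp + amm*bmm*cmm)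
      - bmm*bpp*(amm*bmp*cmp + app*bpm*cpm)*(apm*bpm*cmm + amp*bmp*cpp)
      = (app*apm*bpp*bpm - amp*amm*bmp*bmm) * (bpp*bmp*cpp*cmp - bpm*bmm*cpm*cmm) := by
  ring

end BranchFactorization

theorem stmt_16_general (app apm amp amm bpp bpm bmp bmm cpp cpm cmp cmm : ℤ)
    (rab : app*apm*bpp*bpm - amp*amm*bmp*bmm = 1)
    (rac : app*amp*cpp*cpm - apm*amm*cmp*cmm = 1)
    (rbc : bpp*bmp*cpp*cmp - bpm*bmm*cpm*cmm = 1) :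
    let d1 := amp*bmm*cpm + apm*bpp*cmp
    let d2 := amm*bmp*cmp + app*bpm*cpm
    let d3 := app*bpp*cpp + amm*bmm*cmm
    let d4 := apm*bpm*cmm + amp*bmp*cpp
    cmp*cpm*d3*d4 - cmm*cpp*d1*d2 = 1 ∧
    apm*amp*d2*d3 - app*amm*d1*d4 = 1 ∧
    bmp*bpm*d1*d3 - bmm*bpp*d2*d4 = 1 := by
  intro _ _ _ _
  refine ⟨?_, ?_, ?_⟩
  · rw [branch_factor_c, rac, rbc, one_mul]
  · rw [branch_factor_a, rab, rac, one_mul]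
  · rw [branch_factor_b, rab, rbc, one_mul]

theorem stmt_16 (app apm amp amm bpp bpm bmp bmm cpp cpm cmp cmm : ℤ)
    (h1 : 0 < app) (h2 : 0 < apm) (h3 : 0 < amp) (h4 : 0 < amm)
    (h5 : 0 < bpp) (h6 : 0 < bpm) (h7 : 0 < bmp) (h8 : 0 < bmm)
    (h9 : 0 < cpp) (h10 : 0 < cpm) (h11 : 0 < cmp) (h12 : 0 < cmm)
    (rab : app*apm*bpp*bpm - amp*amm*bmp*bmm = 1)
    (rac : app*amp*cpp*cpm - apm*amm*cmp*cmm = 1)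
    (rbc : bpp*bmp*cpp*cmp - bpm*bmm*cpm*cmm = 1) :
    let d1 := amp*bmm*cpm + apm*bpp*cmp
    let d2 := amm*bmp*cmp + app*bpm*cpm
    let d3 := app*bpp*cpp + amm*bmm*cmm
    let d4 := apm*bpm*cmm + amp*bmp*cpp
    cmp*cpm*d3*d4 - cmm*cpp*d1*d2 = 1 ∧
    apm*amp*d2*d3 - app*amm*d1*d4 = 1 ∧
    bmp*bpm*d1*d3 - bmm*bpp*d2*d4 = 1 :=
  stmt_16_general app apm amp amm bpp bpm bmp bmm cpp cpm cmp cmm rab rac rbc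
end

section
/- An irregular Diophantine quadruple (a,b,c,d) of positive integers with a < b < c < d exists if and only if there exist positive integers a', b', c' (all less than d) such that (a, b, c', d), (a, b', c, d), and (a', b, c, d) are three distinct regular Diophantine quadruples. -/
def DiophQuad (a b c d : ℤ) : Prop :=
  IsSquare (a*b+1) ∧ IsSquare (a*c+1) ∧ IsSquare (a*d+1) ∧
  IsSquare (b*c+1) ∧ IsSquare (b*d+1) ∧ IsSquare (c*d+1)

theorem IsSquare.exists_nonneg_mul_self {R : Type*} [Ring R] [LinearOrder R] [IsOrderedRing R]
    {n : R} (h : IsSquare n) : ∃ r, 0 ≤ r ∧ r * r = n := by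
  obtain ⟨k, rfl⟩ := h
  exact ⟨|k|, abs_nonneg k, abs_mul_abs_self k⟩

theorem P_swap₁₂ (a b c d : ℤ) : P a b c d = P b a c d := by
  unfold P; ring

theorem P_swap₂₃ (a b c d : ℤ) : P a b c d = P a c b d := by
  unfold P; ring

theorem DiophQuad.swap₁₂ {a b c d : ℤ} (h : DiophQuad a b c d) : DiophQuad b a c d := by
  obtain ⟨hab, hac, had, hbc, hbd, hcd⟩ := h
  exact ⟨mul_comm a b ▸ hab, hbc, hbd, hac, had, hcd⟩

theorem DiophQuad.swap₂₃ {a b c d : ℤ} (h : DiophQuad a b c d) : DiophQuad a c b d := by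
  obtain ⟨hab, hac, had, hbc, hbd, hcd⟩ := h
  exact ⟨hac, hab, had, mul_comm b c ▸ hbc, hcd, hbd⟩

theorem add_add_two_mul_le_of_diophTriple {a b x r p q : ℤ} (ha : 0 < a) (hab : a < b)
    (hbx : b < x) (hr : 0 ≤ r) (hr2 : r * r = a * b + 1) (hp : 0 ≤ p) (hp2 : p * p = a * x + 1)
    (hq : 0 ≤ q) (hq2 : q * q = b * x + 1) : a + b + 2 * r ≤ x := by
  have hx : 0 < x := by linarith
  have key : (p * q) * (p * q) - (r * x) * (r * x) = (a + b - x) * x + 1 := by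
    linear_combination (q * q) * hp2 + (a * x + 1) * hq2 - (x * x) * hr2
  rcases lt_trichotomy (p * q) (r * x) with h | h | h
  · have h1 : (p * q) * (p * q) ≤ (r * x - 1) * (r * x - 1) :=
      mul_self_le_mul_self (by positivity) (by omega)
    have h2 : (a + b + 2 * r) * x ≤ x * x := by nlinarith
    exact le_of_mul_le_mul_right h2 hx
  · have hx1 : x ∣ 1 := ⟨x - a - b, by rw [h] at key; linear_combination -key⟩
    have hx_eq := Int.eq_one_of_dvd_one hx.le hx1
    omega
  · have h1 : (r * x + 1) * (r * x + 1) ≤ (p * q) * (p * q) :=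
      mul_self_le_mul_self (by positivity) h
    have h2 : 2 * r ≤ a + b - x := le_of_mul_le_mul_right (by nlinarith) hx
    nlinarith [mul_self_lt_mul_self (by positivity) (by linarith : 2 * r < a),
      mul_lt_mul_of_pos_left hab ha]

theorem not_isSquare_mul_add_add_two_mul_add_one {a b c r s u : ℤ} (ha : 0 < a) (hab : a < b)
    (hbc : b < c) (hr : 0 ≤ r) (hr2 : r * r = a * b + 1) (hs : 0 ≤ s) (hs2 : s * s = a * c + 1)
    (hu : 0 ≤ u) (hu2 : u * u = b * c + 1) : ¬ IsSquare (a * (b + c + 2 * u) + 1) := by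
  intro hsq
  obtain ⟨q, hq, hq2⟩ := hsq.exists_nonneg_mul_self
  -- `q² = r² + s² - 1 + 2au` lies strictly between `(r + s - 1)²` and `(r + s)²`.
  have hr2' : 2 ≤ r := by nlinarith
  have hs2' : 2 ≤ s := by nlinarith
  have hau : 0 ≤ a * u := by positivity
  have e : (r * s) * (r * s) - (a * u) * (a * u) = a * b + a * c + 1 - a * a := by
    linear_combination (s * s) * hr2 + (a * b + 1) * hs2 - (a * a) * hu2
  have hab' : a * a < a * b := mul_lt_mul_of_pos_left hab ha
  have hac : 0 < a * c := by nlinarith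
  have hau_lt : a * u < r * s := lt_of_mul_self_lt_mul_self₀ (by positivity) (by linarith)
  have hrs : r * r + s * s ≤ (r + s - 1) * (r * s) := by
    nlinarith [mul_self_nonneg (r - s), mul_nonneg (by linarith : (0 : ℤ) ≤ r - 2) (mul_self_nonneg s),
      mul_nonneg (by linarith : (0 : ℤ) ≤ s - 2) (mul_self_nonneg r)]
  have hdiff : r * s - a * u < r + s - 1 := by
    refine lt_of_mul_lt_mul_right (a := r * s + a * u) ?_ (by linarith)
    nlinarith
  have h1 : q < r + s := lt_of_mul_self_lt_mul_self₀ (by positivity) (by nlinarith)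
  have h2 : r + s - 1 < q := lt_of_mul_self_lt_mul_self₀ hq (by nlinarith)
  omega

/-- The smaller root in `x` of `P A B x D = 0` when `r, q, v` are the square roots of
`AB + 1, AD + 1, BD + 1`. -/
def lowerRegularExt (A B D r q v : ℤ) : ℤ := A + B + D + 2 * A * B * D - 2 * r * q * v

section LowerRegularExt

variable {A B D r q v : ℤ}

theorem P_lowerRegularExt (hr2 : r * r = A * B + 1) (hq2 : q * q = A * D + 1)
    (hv2 : v * v = B * D + 1) : P A B (lowerRegularExt A B D r q v) D = 0 := by
  unfold P lowerRegularExt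
  linear_combination (4 * q * q * v * v) * hr2 + (4 * (A * B + 1) * v * v) * hq2 +
    (4 * (A * B + 1) * (A * D + 1)) * hv2

theorem diophQuad_lowerRegularExt (hr2 : r * r = A * B + 1) (hq2 : q * q = A * D + 1)
    (hv2 : v * v = B * D + 1) : DiophQuad A B (lowerRegularExt A B D r q v) D := by
  refine ⟨⟨r, hr2.symm⟩, ⟨q * r - A * v, ?_⟩, ⟨q, hq2.symm⟩, ⟨r * v - B * q, ?_⟩, ⟨v, hv2.symm⟩,
    ⟨q * v - D * r, ?_⟩⟩ <;> unfold lowerRegularExt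
  · linear_combination -(q * q) * hr2 - (A * B + 1) * hq2 - (A * A) * hv2
  · linear_combination -(v * v) * hr2 - (B * B) * hq2 - (A * B + 1) * hv2
  · linear_combination -(D * D) * hr2 - (v * v) * hq2 - (A * D + 1) * hv2

theorem lowerRegularExt_mul (hr2 : r * r = A * B + 1) (hq2 : q * q = A * D + 1)
    (hv2 : v * v = B * D + 1) :
    lowerRegularExt A B D r q v * (A + B + D + 2 * A * B * D + 2 * r * q * v) =
      (D - A - B) * (D - A - B) - 4 * (A * B + 1) := by
  unfold lowerRegularExt
  linear_combination (-4 * q * q * v * v) * hr2 + (-4 * (A * B + 1) * v * v) * hq2 +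
    (-4 * (A * B + 1) * (A * D + 1)) * hv2

theorem lowerRegularExt_mem_Ioo (hA : 0 < A) (hB : 0 < B) (hr : 0 ≤ r) (hq : 0 ≤ q)
    (hv : 0 ≤ v) (hr2 : r * r = A * B + 1) (hq2 : q * q = A * D + 1) (hv2 : v * v = B * D + 1)
    (hgap : A + B + 2 * r < D) : lowerRegularExt A B D r q v ∈ Set.Ioo 0 D := by
  have key := lowerRegularExt_mul hr2 hq2 hv2
  have hD : 0 < D := by linarith
  have hABD : 0 < A * B * D := by positivity
  have hrqv : 0 ≤ r * q * v := by positivity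
  have hsq : (2 * r + 1) * (2 * r + 1) ≤ (D - A - B) * (D - A - B) :=
    mul_self_le_mul_self (by linarith) (by linarith)
  have hsq' : (D - A - B) * (D - A - B) < D * D := mul_self_lt_mul_self (by linarith) (by linarith)
  constructor
  · refine pos_of_mul_pos_left (b := A + B + D + 2 * A * B * D + 2 * r * q * v) ?_ (by linarith)
    nlinarith
  · refine lt_of_mul_lt_mul_right (a := A + B + D + 2 * A * B * D + 2 * r * q * v) ?_ (by linarith)
    nlinarith

theorem exists_regular_diophQuad_lt (hA : 0 < A) (hB : 0 < B) (hr : 0 ≤ r) (hq : 0 ≤ q)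
    (hv : 0 ≤ v) (hr2 : r * r = A * B + 1) (hq2 : q * q = A * D + 1) (hv2 : v * v = B * D + 1)
    (hgap : A + B + 2 * r < D) : ∃ x, 0 < x ∧ x < D ∧ DiophQuad A B x D ∧ P A B x D = 0 :=
  have hx := lowerRegularExt_mem_Ioo hA hB hr hq hv hr2 hq2 hv2 hgap
  ⟨_, hx.1, hx.2, diophQuad_lowerRegularExt hr2 hq2 hv2, P_lowerRegularExt hr2 hq2 hv2⟩

end LowerRegularExt

theorem eq_of_P_eq_zero_of_lt {a b c c' d : ℤ} (ha : 0 < a) (hb : 0 < b) (hd : 0 < d)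
    (hc : c < d) (hc' : c' < d) (h : P a b c d = 0) (h' : P a b c' d = 0) : c = c' := by
  have vieta : (c - c') * (c + c' - 2 * (a + b + d + 2 * a * b * d)) = 0 := by
    unfold P at h h'
    linear_combination h - h'
  have habd : 0 < a * b * d := by positivity
  rcases mul_eq_zero.1 vieta with h | h <;> linarith

theorem exists_regular_of_irregular {a b c d : ℤ} (ha : 0 < a) (hab : a < b) (hbc : b < c)
    (hcd : c < d) (hD : DiophQuad a b c d) (hP : P a b c d ≠ 0) :
    ∃ a' b' c', 0 < a' ∧ a' < d ∧ 0 < b' ∧ b' < d ∧ 0 < c' ∧ c' < d ∧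
      DiophQuad a b c' d ∧ P a b c' d = 0 ∧ DiophQuad a b' c d ∧ P a b' c d = 0 ∧
      DiophQuad a' b c d ∧ P a' b c d = 0 ∧ c' ≠ c ∧ b' ≠ b := by
  obtain ⟨h_ab, h_ac, h_ad, h_bc, h_bd, h_cd⟩ := hD
  obtain ⟨r, hr, hr2⟩ := h_ab.exists_nonneg_mul_self
  obtain ⟨s, hs, hs2⟩ := h_ac.exists_nonneg_mul_self
  obtain ⟨q, hq, hq2⟩ := h_ad.exists_nonneg_mul_self
  obtain ⟨u, hu, hu2⟩ := h_bc.exists_nonneg_mul_self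
  obtain ⟨v, hv, hv2⟩ := h_bd.exists_nonneg_mul_self
  obtain ⟨w, hw, hw2⟩ := h_cd.exists_nonneg_mul_self
  have hb : 0 < b := ha.trans hab
  have hc : 0 < c := hb.trans hbc
  have gap_abd : a + b + 2 * r < d :=
    (add_add_two_mul_le_of_diophTriple ha hab hbc hr hr2 hs hs2 hu hu2).trans_lt hcd
  have gap_bcd : b + c + 2 * u < d := by
    refine (add_add_two_mul_le_of_diophTriple hb hbc hcd hu hu2 hv hv2 hw hw2).lt_of_ne ?_
    rintro rfl
    exact not_isSquare_mul_add_add_two_mul_add_one ha hab hbc hr hr2 hs hs2 hu hu2 h_ad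
  have hsu : s < u := lt_of_mul_self_lt_mul_self₀ hu (by nlinarith)
  have gap_acd : a + c + 2 * s < d := by linarith
  obtain ⟨c', hc'0, hc'd, hDc', hPc'⟩ :=
    exists_regular_diophQuad_lt ha hb hr hq hv hr2 hq2 hv2 gap_abd
  obtain ⟨b', hb'0, hb'd, hDb', hPb'⟩ :=
    exists_regular_diophQuad_lt ha hc hs hq hw hs2 hq2 hw2 gap_acd
  obtain ⟨a', ha'0, ha'd, hDa', hPa'⟩ :=
    exists_regular_diophQuad_lt hb hc hu hv hw hu2 hv2 hw2 gap_bcd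
  have hPb'' : P a b' c d = 0 := (P_swap₂₃ ..).trans hPb'
  refine ⟨a', b', c', ha'0, ha'd, hb'0, hb'd, hc'0, hc'd, hDc', hPc', hDb'.swap₂₃, hPb'',
    hDa'.swap₂₃.swap₁₂, (P_swap₁₂ ..).trans ((P_swap₂₃ ..).trans hPa'), ?_, ?_⟩
  · rintro rfl
    exact hP hPc'
  · rintro rfl
    exact hP hPb''

theorem stmt_19 :
    (∃ a b c d : ℤ, 0 < a ∧ a < b ∧ b < c ∧ c < d ∧ DiophQuad a b c d ∧
        P a b c d ≠ 0) ↔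
    (∃ a b c d a' b' c' : ℤ, 0 < a ∧ a < b ∧ b < c ∧ c < d ∧
        0 < a' ∧ a' < d ∧ 0 < b' ∧ b' < d ∧ 0 < c' ∧ c' < d ∧
        DiophQuad a b c' d ∧ P a b c' d = 0 ∧
        DiophQuad a b' c d ∧ P a b' c d = 0 ∧
        DiophQuad a' b c d ∧ P a' b c d = 0 ∧
        (a, b, c') ≠ (a, b', c) ∧ (a, b, c') ≠ (a', b, c) ∧ (a, b', c) ≠ (a', b, c)) := by
  constructor
  · rintro ⟨a, b, c, d, ha, hab, hbc, hcd, hD, hP⟩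
    obtain ⟨a', b', c', ha', ha'd, hb', hb'd, hc', hc'd, hD₁, hP₁, hD₂, hP₂, hD₃, hP₃, hc'c, hb'b⟩ :=
      exists_regular_of_irregular ha hab hbc hcd hD hP
    refine ⟨a, b, c, d, a', b', c', ha, hab, hbc, hcd, ha', ha'd, hb', hb'd, hc', hc'd,
      hD₁, hP₁, hD₂, hP₂, hD₃, hP₃, ?_, ?_, ?_⟩ <;> simp [hc'c, hb'b]
  · rintro ⟨a, b, c, d, a', b', c', ha, hab, hbc, hcd, -, -, -, hb'd, -, hc'd, hD₁, hP₁, hD₂, hP₂,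
      hD₃, -, hne, -, -⟩
    obtain ⟨h_ab, -, h_ad, -, h_bd, -⟩ := hD₁
    obtain ⟨-, h_ac, -, -, -, h_cd⟩ := hD₂
    obtain ⟨-, -, -, h_bc, -, -⟩ := hD₃
    have hb : 0 < b := ha.trans hab
    have hc : 0 < c := hb.trans hbc
    have hd : 0 < d := hc.trans hcd
    refine ⟨a, b, c, d, ha, hab, hbc, hcd, ⟨h_ab, h_ac, h_ad, h_bc, h_bd, h_cd⟩, fun hP ↦ hne ?_⟩
    have hcc' : c = c' := eq_of_P_eq_zero_of_lt ha hb hd hcd hc'd hP hP₁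
    have hbb' : b = b' := eq_of_P_eq_zero_of_lt ha hc hd (hbc.trans hcd) hb'd
      ((P_swap₂₃ ..).symm.trans hP) ((P_swap₂₃ ..).symm.trans hP₂)
    rw [hcc', hbb']
end
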